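/- arXiv:1701.03289 — 6 statements merged into one kernel-verified Lean document; each statement's English description precedes it below -/
import Mathlib

section
/- For all distinct x, y in the open interval (-1,1), one has log|x - y| = -log 2 - Σ_{n=1}^∞ (2/n) T_n(x) T_n(y), where T_n is the n-th Chebyshev polynomial of the first kind (the unique polynomial with T_n(cos θ) = cos(nθ)). -/
/-!
Write `x = cos a` and `y = cos b`, so that `2 Tₙ(x) Tₙ(y) = cos n(a - b) + cos n(a + b)`.
For `e^{iθ} ≠ 1` the series `∑ cos(nθ)/n` is the real part of `∑ zⁿ/n` at `z = e^{iθ}`,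
which converges by Dirichlet's test and, by Abel's limit theorem, to the boundary value
`-log(1 - z)`, whose real part is `-log |2 sin(θ/2)|`. Finally
`cos a - cos b = -2 sin((a + b)/2) sin((a - b)/2)` turns the two logarithms into
`log |x - y| + log 2`.
-/

open Polynomial Filter

open Finset Topology

theorem norm_geom_sum_le {𝕜 : Type*} [NormedDivisionRing 𝕜] {z : 𝕜} (hz : ‖z‖ ≤ 1) (hz1 : z ≠ 1)
    (n : ℕ) : ‖∑ i ∈ range n, z ^ i‖ ≤ 2 / ‖z - 1‖ := by
  rw [geom_sum_eq hz1, norm_div]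
  gcongr
  calc ‖z ^ n - 1‖ ≤ ‖z ^ n‖ + ‖(1 : 𝕜)‖ := norm_sub_le _ _
    _ ≤ 1 + 1 := add_le_add (by rw [norm_pow]; exact pow_le_one₀ (norm_nonneg _) hz) norm_one.le
    _ = 2 := by norm_num

namespace Complex

theorem re_lt_one_of_norm_le_one {z : ℂ} (hz : ‖z‖ ≤ 1) (hz1 : z ≠ 1) : z.re < 1 := by
  by_cases him : z.im = 0
  · have hre : z.re ≠ 1 := fun h => hz1 (ext h (by simpa using him))
    have : |z.re| ≤ 1 := (abs_re_le_norm z).trans hz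
    exact lt_of_le_of_ne (abs_le.mp this).2 hre
  · exact (le_abs_self _).trans_lt ((abs_re_lt_norm.mpr him).trans_le hz)

-- The `n = 0` term is the junk value `z ^ 0 / 0 = 0`.
theorem exists_tendsto_sum_range_pow_div {z : ℂ} (hz : ‖z‖ ≤ 1) (hz1 : z ≠ 1) :
    ∃ l, Tendsto (fun N => ∑ n ∈ range N, z ^ n / n) atTop (𝓝 l) := by
  have hanti : Antitone fun i : ℕ => (1 : ℝ) / (i + 1) := fun a b hab => by
    dsimp only; gcongr
  obtain ⟨l, hl⟩ := cauchySeq_tendsto_of_complete <|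
    hanti.cauchySeq_series_mul_of_tendsto_zero_of_bounded
      tendsto_one_div_add_atTop_nhds_zero_nat (norm_geom_sum_le hz hz1)
  refine ⟨z * l, (tendsto_add_atTop_iff_nat 1).mp ?_⟩
  convert hl.const_mul z using 2 with N
  rw [sum_range_succ', mul_sum]
  simp only [real_smul, CharP.cast_eq_zero, div_zero, add_zero, Nat.cast_add, Nat.cast_one,
    pow_succ', ofReal_div, ofReal_one, ofReal_add, ofReal_natCast]
  exact sum_congr rfl fun i _ => by ring

theorem tendsto_sum_range_pow_div_neg_log {z : ℂ} (hz : ‖z‖ ≤ 1) (hz1 : z ≠ 1) :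
    Tendsto (fun N => ∑ n ∈ range N, z ^ n / n) atTop (𝓝 (-log (1 - z))) := by
  obtain ⟨l, hl⟩ := exists_tendsto_sum_range_pow_div hz hz1
  have habel := tendsto_map'_iff.mp (tendsto_tsum_powerSeries_nhdsWithin_lt hl)
  have hslit : 1 - z ∈ slitPlane := Or.inl (by simpa using re_lt_one_of_norm_le_one hz hz1)
  have hcont : Tendsto (fun r : ℝ => -log (1 - r * z)) (𝓝[<] 1) (𝓝 (-log (1 - z))) := by
    have h : ContinuousAt (fun r : ℝ => -log (1 - r * z)) 1 :=
      ((continuousAt_clog (by simpa using hslit)).comp (by fun_prop)).neg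
    simpa using h.tendsto.mono_left nhdsWithin_le_nhds
  have htaylor : (fun r : ℝ => -log (1 - r * z)) =ᶠ[𝓝[<] 1]
      ((fun w => ∑' n : ℕ, z ^ n / n * w ^ n) ∘ ofReal) := by
    filter_upwards [Ioo_mem_nhdsLT (show (0 : ℝ) < 1 from one_pos)] with r hr
    have hrz : ‖(r : ℂ) * z‖ < 1 := by
      rw [norm_mul, norm_real, Real.norm_of_nonneg hr.1.le]
      exact (mul_le_of_le_one_right hr.1.le hz).trans_lt hr.2
    rw [← (hasSum_taylorSeries_neg_log hrz).tsum_eq]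
    exact tsum_congr fun n => by ring
  rwa [← tendsto_nhds_unique habel (hcont.congr' htaylor)]

end Complex

namespace Real

theorem tendsto_sum_Icc_cos_mul_div {θ : ℝ} (hθ : sin (θ / 2) ≠ 0) :
    Tendsto (fun M : ℕ => ∑ n ∈ Icc 1 M, cos (n * θ) / n) atTop
      (𝓝 (-log (2 * |sin (θ / 2)|))) := by
  set z := Complex.exp (Complex.I * θ)
  have hnorm : ‖z - 1‖ = 2 * |sin (θ / 2)| := by
    rw [Complex.norm_exp_I_mul_ofReal_sub_one, norm_mul, Real.norm_two, Real.norm_eq_abs]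
  have hz1 : z ≠ 1 := fun h => hθ (by simpa [h] using hnorm)
  have hre := (Complex.continuous_re.tendsto _).comp
    (Complex.tendsto_sum_range_pow_div_neg_log (Complex.norm_exp_I_mul_ofReal θ).le hz1)
  rw [Complex.neg_re, Complex.log_re, norm_sub_rev, hnorm] at hre
  refine ((tendsto_add_atTop_iff_nat 1).mpr hre).congr fun M => ?_
  rw [Function.comp_apply, Complex.re_sum, range_eq_Ico,
    sum_eq_sum_Ico_succ_bot M.add_one_pos]
  simp only [Nat.cast_zero, div_zero, Complex.zero_re, zero_add, Ico_add_one_right_eq_Icc]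
  refine sum_congr rfl fun n _ => ?_
  rw [← Complex.exp_nat_mul, Complex.div_natCast_re,
    show (n : ℂ) * (Complex.I * θ) = ((n * θ : ℝ) : ℂ) * Complex.I by push_cast; ring,
    Complex.exp_ofReal_mul_I_re]

theorem tendsto_neg_log_two_sub_sum_cos_mul_cos {a b : ℝ} (hab : cos a ≠ cos b) :
    Tendsto (fun M : ℕ => -log 2 - ∑ n ∈ Icc 1 M, 2 / (n : ℝ) * cos (n * a) * cos (n * b))
      atTop (𝓝 (log |cos a - cos b|)) := by
  have hsub := cos_sub_cos a b
  obtain ⟨hsum, hdiff⟩ : sin ((a + b) / 2) ≠ 0 ∧ sin ((a - b) / 2) ≠ 0 := by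
    simpa [hsub, or_imp] using sub_ne_zero.mpr hab
  have hlim := ((tendsto_sum_Icc_cos_mul_div hdiff).add
    (tendsto_sum_Icc_cos_mul_div hsum)).const_sub (-log 2)
  have hlog : -log 2 - (-log (2 * |sin ((a - b) / 2)|) + -log (2 * |sin ((a + b) / 2)|)) =
      log |cos a - cos b| := by
    rw [hsub, abs_mul, abs_mul, abs_neg, abs_two,
      show 2 * |sin ((a + b) / 2)| * |sin ((a - b) / 2)|
        = 2 * |sin ((a - b) / 2)| * (2 * |sin ((a + b) / 2)|) / 2 by ring,
      log_div (by positivity) two_ne_zero,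
      log_mul (x := 2 * |sin ((a - b) / 2)|) (by positivity) (by positivity)]
    ring
  rw [hlog] at hlim
  refine hlim.congr fun M => ?_
  rw [← sum_add_distrib]
  refine congrArg _ (sum_congr rfl fun n _ => ?_)
  rw [← add_div, div_mul_eq_mul_div, div_mul_eq_mul_div, two_mul_cos_mul_cos, mul_sub, mul_add]

end Real

/-- Chebyshev expansion of the logarithm: for distinct `x, y ∈ (-1,1)`,
`log |x - y| = -log 2 - ∑_{n=1}^∞ (2/n) T_n(x) T_n(y)`,
formalized as convergence of the partial sums. -/
theorem chebyshev_log_expansion (x y : ℝ) (hx : x ∈ Set.Ioo (-1 : ℝ) 1)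
    (hy : y ∈ Set.Ioo (-1 : ℝ) 1) (hxy : x ≠ y) :
    Tendsto (fun M : ℕ =>
        -Real.log 2 - ∑ n ∈ Finset.Icc 1 M,
          (2 / (n : ℝ)) * ((Chebyshev.T ℝ n).eval x) * ((Chebyshev.T ℝ n).eval y))
      atTop (nhds (Real.log |x - y|)) := by
  obtain ⟨a, rfl⟩ : ∃ a, Real.cos a = x := ⟨_, Real.cos_arccos hx.1.le hx.2.le⟩
  obtain ⟨b, rfl⟩ : ∃ b, Real.cos b = y := ⟨_, Real.cos_arccos hy.1.le hy.2.le⟩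
  simpa only [Chebyshev.T_real_cos, Int.cast_natCast] using
    Real.tendsto_neg_log_two_sub_sum_cos_mul_cos hxy
end

section
/- For every y in (-1,1), the logarithmic potential of the arcsine law satisfies (1/π) ∫_{-1}^{1} log|x - y| / √(1 - x²) dx = -log 2. -/
/-!
Substituting `x = cos θ` turns the arcsine law into the uniform law on `[0, π]`, so with
`y = cos φ` the claim is `∫₀^π log |cos θ - cos φ| dθ = -π log 2`. The product formula
`cos θ - cos φ = 2 sin (θ/2 + φ/2) sin (φ/2 - θ/2)` splits the logarithm into `log 2` and two
integrals of `log ∘ sin` over adjacent intervals of length `π/2`, which together cover one period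
of `log ∘ sin`; that period integral is Euler's `∫₀^π log (sin x) dx = -π log 2`.
-/

open Real intervalIntegral MeasureTheory Interval

theorem integral_log_sin_add_pi (a : ℝ) : ∫ x in a..a + π, log (sin x) = -log 2 * π := by
  have hperiodic : Function.Periodic (fun x => log (sin x)) π := fun x => by
    simp only [sin_add_pi, log_neg_eq_log]
  rw [hperiodic.intervalIntegral_add_eq a 0, zero_add, integral_log_sin_zero_pi]

theorem cos_sub_cos_eq_two_mul_sin_mul_sin (θ φ : ℝ) :
    cos θ - cos φ = 2 * sin (θ / 2 + φ / 2) * sin (φ / 2 - θ / 2) := by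
  rw [cos_sub_cos, ← neg_sub (θ / 2), sin_neg]
  ring_nf

theorem log_abs_cos_sub_cos {θ φ : ℝ} (h : cos θ ≠ cos φ) :
    log |cos θ - cos φ| = log 2 + log (sin (θ / 2 + φ / 2)) + log (sin (φ / 2 - θ / 2)) := by
  have hne := sub_ne_zero.2 h
  rw [cos_sub_cos_eq_two_mul_sin_mul_sin] at hne ⊢
  obtain ⟨⟨-, h₁⟩, h₂⟩ := (mul_ne_zero_iff.1 hne).imp_left mul_ne_zero_iff.1
  rw [log_abs, log_mul (by positivity) h₂, log_mul two_ne_zero h₁]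

theorem ae_cos_ne_cos (φ : ℝ) : ∀ᵐ θ, θ ∈ Ι 0 π → cos θ ≠ cos φ := by
  have hnull : volume {θ | θ ∈ Ι 0 π ∧ cos θ = cos φ} = 0 := by
    refine Set.Subsingleton.measure_zero (fun θ hθ θ' hθ' => ?_) _
    refine injOn_cos ?_ ?_ (hθ.2.trans hθ'.2.symm) <;>
      exact Set.uIoc_subset_uIcc.trans (Set.uIcc_of_le pi_pos.le).subset (by simp_all)
  filter_upwards [measure_eq_zero_iff_ae_notMem.1 hnull] with θ hθ hmem heq
  exact hθ ⟨hmem, heq⟩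

theorem integral_log_abs_cos_sub_cos (φ : ℝ) :
    ∫ θ in 0..π, log |cos θ - cos φ| = -log 2 * π := by
  have hint₁ : IntervalIntegrable (fun θ => log (sin (θ / 2 + φ / 2))) volume 0 π :=
    MeromorphicOn.intervalIntegrable_log fun _ _ => by fun_prop
  have hint₂ : IntervalIntegrable (fun θ => log (sin (φ / 2 - θ / 2))) volume 0 π :=
    MeromorphicOn.intervalIntegrable_log fun _ _ => by fun_prop
  have hperiod : (∫ x in φ / 2 - π / 2..φ / 2, log (sin x))
      + ∫ x in φ / 2..π / 2 + φ / 2, log (sin x) = -log 2 * π := by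
    rw [integral_add_adjacent_intervals (f := fun x => log (sin x)) intervalIntegrable_log_sin
      intervalIntegrable_log_sin, ← integral_log_sin_add_pi (φ / 2 - π / 2)]
    ring_nf
  rw [integral_congr_ae <| (ae_cos_ne_cos φ).mono fun θ h hθ => log_abs_cos_sub_cos (h hθ),
    integral_add (intervalIntegrable_const.add hint₁) hint₂,
    integral_add intervalIntegrable_const hint₁,
    integral_comp_div_add (fun x => log (sin x)) two_ne_zero,
    integral_comp_sub_div (fun x => log (sin x)) two_ne_zero, intervalIntegral.integral_const]
  simp only [zero_div, zero_add, sub_zero, smul_eq_mul]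
  linarith

theorem integral_div_sqrt_one_sub_sq (f : ℝ → ℝ) :
    ∫ x in -1..1, f x / √(1 - x ^ 2) = ∫ θ in 0..π, f (cos θ) := by
  rw [← Polynomial.Chebyshev.integral_measureT_eq_integral_cos,
    Polynomial.Chebyshev.integral_measureT]
  simp only [div_eq_mul_inv, sqrt_inv]

/-- Logarithmic potential of the arcsine law: for `y ∈ (-1,1)`,
`(1/π) ∫_{-1}^1 log |x - y| / √(1-x²) dx = -log 2`. -/
theorem arcsine_log_potential (y : ℝ) (hy : y ∈ Set.Ioo (-1 : ℝ) 1) :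
    (1 / Real.pi) * ∫ x in (-1 : ℝ)..1, Real.log |x - y| / Real.sqrt (1 - x ^ 2)
      = -Real.log 2 := by
  rw [integral_div_sqrt_one_sub_sq, ← cos_arccos hy.1.le hy.2.le,
    integral_log_abs_cos_sub_cos]
  field_simp
end

section
/- For every k ≥ 1 and every x in (-1,1), the Cauchy principal value integral (1/π) P.V. ∫_{-1}^{1} T_k'(y) √(1-y²) / (x - y) dy equals k · T_k(x). -/
/-!
For `x ∈ (-1, 1)` put `s = √(1 - x²)`. Off `y = x`, the function
`x arcsin y - √(1 - y²) + s log (1 - x y + s √(1 - y²)) - s log |x - y|`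
is a primitive of `√(1 - y²) / (x - y)`. Its logarithmic singularity is symmetric about `x`, so it
cancels in the principal value, and evaluating at `±1` gives `P.V. ∫ √(1 - y²) / (x - y) dy = π x`.
Since `y / (x - y) = x / (x - y) - 1`, multiplying the density by `y` multiplies the principal value
by `x` and subtracts the ordinary integral of the density. The recurrence
`U_{n+2} = 2 X U_{n+1} - U_n` and the moments `∫ U_n(y) √(1 - y²) dy = 0` for `n ≥ 1` (orthogonality
of the `T_n`, as `(1 - X²) U_n = (T_n - T_{n+2}) / 2`) then give
`P.V. ∫ U_n(y) √(1 - y²) / (x - y) dy = π T_{n+1}(x)` by induction, and `T_k' = k U_{k-1}`.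
-/

open Polynomial Filter

open Real Set Topology intervalIntegral MeasureTheory Polynomial.Chebyshev

section PrincipalValue

variable {f g : ℝ → ℝ} {a b x ε : ℝ}

theorem tendsto_integral_add_integral_nhds_zero (hg : Continuous g) (a b x : ℝ) :
    Tendsto (fun ε => (∫ y in a..x - ε, g y) + ∫ y in x + ε..b, g y) (𝓝 0)
      (𝓝 (∫ y in a..b, g y)) := by
  have hint : ∀ u v, IntervalIntegrable g volume u v := hg.intervalIntegrable
  have hsplit : ∀ ε, (∫ y in a..x - ε, g y) + ∫ y in x + ε..b, g y
      = (∫ y in a..b, g y) - ((∫ y in a..x + ε, g y) - ∫ y in a..x - ε, g y) := fun ε => by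
    rw [← integral_add_adjacent_intervals (hint a (x + ε)) (hint (x + ε) b)]
    ring
  have hprim : Continuous (fun t => ∫ y in a..t, g y) := continuous_primitive hint a
  have hgap := ((hprim.comp (continuous_const_add x)).sub
    (hprim.comp (continuous_sub_left x))).tendsto 0
  simpa [hsplit] using tendsto_const_nhds.sub hgap

-- `Real.log` is even, so `log (x - t)` stands for `log |x - t|` on both sides of `x`.
theorem tendsto_integral_add_integral_of_hasDerivAt_sub_log {H : ℝ → ℝ} {c : ℝ}
    (hax : a < x) (hxb : x < b) (hH : ContinuousOn H (Icc a b))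
    (hf : ContinuousOn f (Icc a b \ {x}))
    (hderiv : ∀ y ∈ Ioo a b, y ≠ x → HasDerivAt (fun t => H t - c * log (x - t)) (f y) y) :
    Tendsto (fun ε => (∫ y in a..x - ε, f y) + ∫ y in x + ε..b, f y) (𝓝[>] 0)
      (𝓝 (H b - c * log (x - b) - (H a - c * log (x - a)))) := by
  set F := fun t => H t - c * log (x - t)
  have ftc : ∀ u v, a ≤ u → u ≤ v → v ≤ b → x ∉ Icc u v → ∫ y in u..v, f y = F v - F u := by
    intro u v hau huv hvb hx
    have hsub : Icc u v ⊆ Icc a b \ {x} := fun y hy =>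
      ⟨⟨hau.trans hy.1, hy.2.trans hvb⟩, fun h => hx (h ▸ hy)⟩
    refine integral_eq_sub_of_hasDerivAt_of_le huv ?_
      (fun y hy => hderiv y ⟨hau.trans_lt hy.1, hy.2.trans_le hvb⟩
        (hsub (Ioo_subset_Icc_self hy)).2)
      ((hf.mono hsub).intervalIntegrable_of_Icc huv)
    exact (hH.mono (hsub.trans sdiff_subset)).sub (continuousOn_const.mul
      ((continuousOn_const.sub continuousOn_id).log fun y hy =>
        sub_ne_zero.2 fun h => (hsub hy).2 h.symm))
  have hHx : ContinuousAt H x := hH.continuousAt (Icc_mem_nhds hax hxb)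
  have hl : Tendsto (fun ε => x - ε) (𝓝 0) (𝓝 x) := by
    simpa using (continuous_sub_left x).tendsto 0
  have hr : Tendsto (fun ε => x + ε) (𝓝 0) (𝓝 x) := by
    simpa using (continuous_const_add x).tendsto 0
  have hgap := (hHx.tendsto.comp hl).sub (hHx.tendsto.comp hr)
  rw [sub_self] at hgap
  have hlim := tendsto_nhdsWithin_of_tendsto_nhds (s := Ioi 0)
    ((tendsto_const_nhds (x := F b - F a)).add hgap)
  rw [add_zero] at hlim
  refine hlim.congr' ?_
  filter_upwards [Ioo_mem_nhdsGT (lt_min (sub_pos.2 hax) (sub_pos.2 hxb))] with ε ⟨hε0, hε⟩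
  have hεa : ε < x - a := hε.trans_le (min_le_left _ _)
  have hεb : ε < b - x := hε.trans_le (min_le_right _ _)
  rw [ftc a (x - ε) le_rfl (by linarith) (by linarith) (fun h => by linarith [h.2]),
    ftc (x + ε) b (by linarith) (by linarith) le_rfl (fun h => by linarith [h.1])]
  simp only [F, Function.comp_apply, sub_sub_cancel, show x - (x + ε) = -ε by ring, log_neg_eq_log]
  ring

theorem intervalIntegrable_div_sub (hf : ContinuousOn f (uIcc a b)) (hx : x ∉ uIcc a b) :
    IntervalIntegrable (fun y => f y / (x - y)) volume a b :=
  (hf.div (continuousOn_const.sub continuousOn_id) fun _ hy =>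
    sub_ne_zero.2 (ne_of_mem_of_not_mem hy hx).symm).intervalIntegrable

theorem self_notMem_uIcc_sub (ha : a < x) (hε : 0 < ε) : x ∉ uIcc a (x - ε) := by
  rw [mem_uIcc]; rintro (h | h) <;> linarith [h.1, h.2]

theorem self_notMem_uIcc_add (hb : x < b) (hε : 0 < ε) : x ∉ uIcc (x + ε) b := by
  rw [mem_uIcc]; rintro (h | h) <;> linarith [h.1, h.2]

theorem integral_mul_div_sub (hf : ContinuousOn f (uIcc a b)) (hx : x ∉ uIcc a b) :
    ∫ y in a..b, y * f y / (x - y) = x * (∫ y in a..b, f y / (x - y)) - ∫ y in a..b, f y := by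
  have hxy : ∀ y ∈ uIcc a b, y * f y / (x - y) = x * (f y / (x - y)) - f y := fun y hy => by
    have : x - y ≠ 0 := sub_ne_zero.2 (ne_of_mem_of_not_mem hy hx).symm
    field_simp
    ring
  rw [integral_congr hxy, integral_sub ((intervalIntegrable_div_sub hf hx).const_mul x)
    hf.intervalIntegrable, intervalIntegral.integral_const_mul]

/-- The principal value at `x` of `∫_{-1}^1 f y / (x - y) dy` is the limit of this as `ε → 0⁺`. -/
noncomputable def truncFiniteHilbert (f : ℝ → ℝ) (x ε : ℝ) : ℝ :=
  (∫ y in (-1)..(x - ε), f y / (x - y)) + ∫ y in (x + ε)..1, f y / (x - y)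

theorem truncFiniteHilbert_const_mul (c : ℝ) :
    truncFiniteHilbert (fun y => c * f y) x ε = c * truncFiniteHilbert f x ε := by
  simp only [truncFiniteHilbert, mul_div_assoc, intervalIntegral.integral_const_mul, mul_add]

theorem truncFiniteHilbert_sub (hf : Continuous f) (hg : Continuous g) (hx : x ∈ Ioo (-1) 1)
    (hε : 0 < ε) :
    truncFiniteHilbert (fun y => f y - g y) x ε =
      truncFiniteHilbert f x ε - truncFiniteHilbert g x ε := by
  have hl := self_notMem_uIcc_sub hx.1 hε
  have hr := self_notMem_uIcc_add hx.2 hε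
  simp only [truncFiniteHilbert, sub_div]
  rw [integral_sub (intervalIntegrable_div_sub hf.continuousOn hl)
      (intervalIntegrable_div_sub hg.continuousOn hl),
    integral_sub (intervalIntegrable_div_sub hf.continuousOn hr)
      (intervalIntegrable_div_sub hg.continuousOn hr)]
  ring

theorem truncFiniteHilbert_mul_id (hf : Continuous f) (hx : x ∈ Ioo (-1) 1) (hε : 0 < ε) :
    truncFiniteHilbert (fun y => y * f y) x ε =
      x * truncFiniteHilbert f x ε - ((∫ y in (-1)..(x - ε), f y) + ∫ y in (x + ε)..1, f y) := by
  simp only [truncFiniteHilbert]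
  rw [integral_mul_div_sub hf.continuousOn (self_notMem_uIcc_sub hx.1 hε),
    integral_mul_div_sub hf.continuousOn (self_notMem_uIcc_add hx.2 hε)]
  ring

theorem tendsto_truncFiniteHilbert_mul_id {L : ℝ} (hf : Continuous f)
    (hx : x ∈ Ioo (-1) 1) (h : Tendsto (truncFiniteHilbert f x) (𝓝[>] 0) (𝓝 L)) :
    Tendsto (truncFiniteHilbert (fun y => y * f y) x) (𝓝[>] 0)
      (𝓝 (x * L - ∫ y in (-1)..1, f y)) := by
  refine ((h.const_mul x).sub ((tendsto_integral_add_integral_nhds_zero hf _ _ x).mono_left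
    nhdsWithin_le_nhds)).congr' ?_
  filter_upwards [self_mem_nhdsWithin] with ε hε
  exact (truncFiniteHilbert_mul_id hf hx hε).symm

end PrincipalValue

section SqrtOneSubSq

variable {x y : ℝ}

theorem hasDerivAt_sqrt_one_sub_sq (hy : y ∈ Ioo (-1) 1) :
    HasDerivAt (fun t => √(1 - t ^ 2)) (-y / √(1 - y ^ 2)) y := by
  have hpos : 0 < 1 - y ^ 2 := by nlinarith [hy.1, hy.2]
  have hne : √(1 - y ^ 2) ≠ 0 := (sqrt_pos.2 hpos).ne'
  refine ((((hasDerivAt_id y).pow 2).const_sub 1).sqrt hpos.ne').congr_deriv ?_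
  simp only [Pi.pow_apply, id_eq, Nat.cast_ofNat]
  field_simp
  norm_num

theorem hasDerivAt_mul_arcsin_sub_sqrt_one_sub_sq (x : ℝ) (hy : y ∈ Ioo (-1) 1) :
    HasDerivAt (fun t => x * arcsin t - √(1 - t ^ 2)) ((x + y) / √(1 - y ^ 2)) y := by
  refine (((hasDerivAt_arcsin hy.1.ne' hy.2.ne).const_mul x).sub
    (hasDerivAt_sqrt_one_sub_sq hy)).congr_deriv ?_
  ring

theorem one_sub_mul_add_sqrt_mul_sqrt_pos (hx : x ∈ Ioo (-1) 1) (hy : y ∈ Icc (-1) 1) :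
    0 < 1 - x * y + √(1 - x ^ 2) * √(1 - y ^ 2) := by
  have hxy : x * y < 1 := by
    nlinarith [sq_nonneg (x - y), mul_pos (sub_pos.2 hx.2) (neg_lt_iff_pos_add.1 hx.1),
      mul_nonneg (sub_nonneg.2 hy.2) (neg_le_iff_add_nonneg.1 hy.1)]
  positivity

theorem hasDerivAt_log_one_sub_mul_add_sqrt_mul_sqrt (hx : x ∈ Ioo (-1) 1) (hy : y ∈ Ioo (-1) 1)
    (hyx : y ≠ x) :
    HasDerivAt (fun t => log (1 - x * t + √(1 - x ^ 2) * √(1 - t ^ 2)))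
      ((√(1 - x ^ 2) - √(1 - y ^ 2)) / (√(1 - y ^ 2) * (x - y))) y := by
  set s := √(1 - x ^ 2)
  set u := √(1 - y ^ 2)
  set N := 1 - x * y + s * u
  have hs : 0 < s := sqrt_pos.2 (by nlinarith [hx.1, hx.2])
  have hu : 0 < u := sqrt_pos.2 (by nlinarith [hy.1, hy.2])
  have hs2 : s ^ 2 = 1 - x ^ 2 := sq_sqrt (by nlinarith [hx.1, hx.2])
  have hu2 : u ^ 2 = 1 - y ^ 2 := sq_sqrt (by nlinarith [hy.1, hy.2])
  have hN : 0 < N := one_sub_mul_add_sqrt_mul_sqrt_pos hx (Ioo_subset_Icc_self hy)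
  have hxy : x - y ≠ 0 := sub_ne_zero.2 hyx.symm
  -- the identity holds only after multiplying by `s + u`, i.e. it uses the signs of the roots
  have key : (s - u) * N = -(x - y) * (x * u + s * y) := by
    refine mul_left_cancel₀ (add_pos hs hu).ne' ?_
    linear_combination (N + (x - y) * y) * hs2 + (-N + (x - y) * x) * hu2
  have hlin : HasDerivAt (fun t => 1 - x * t) (-x) y := by
    simpa using ((hasDerivAt_id y).const_mul x).const_sub 1
  have hderivN : HasDerivAt (fun t => 1 - x * t + s * √(1 - t ^ 2)) (-x + s * (-y / u)) y :=
    hlin.add ((hasDerivAt_sqrt_one_sub_sq hy).const_mul s)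
  refine (hderivN.log hN.ne').congr_deriv ?_
  rw [div_eq_div_iff hN.ne' (by positivity), key]
  field_simp
  ring

theorem hasDerivAt_primitive_sqrt_one_sub_sq_div_sub (hx : x ∈ Ioo (-1) 1)
    (hy : y ∈ Ioo (-1) 1) (hyx : y ≠ x) :
    HasDerivAt (fun t => x * arcsin t - √(1 - t ^ 2)
        + √(1 - x ^ 2) * log (1 - x * t + √(1 - x ^ 2) * √(1 - t ^ 2))
        - √(1 - x ^ 2) * log (x - t))
      (√(1 - y ^ 2) / (x - y)) y := by
  have hu : 0 < √(1 - y ^ 2) := sqrt_pos.2 (by nlinarith [hy.1, hy.2])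
  have hs2 : √(1 - x ^ 2) ^ 2 = 1 - x ^ 2 := sq_sqrt (by nlinarith [hx.1, hx.2])
  have hu2 : √(1 - y ^ 2) ^ 2 = 1 - y ^ 2 := sq_sqrt (by nlinarith [hy.1, hy.2])
  have hxy : x - y ≠ 0 := sub_ne_zero.2 hyx.symm
  have hlog : HasDerivAt (fun t => log (x - t)) (-1 / (x - y)) y := by
    simpa using ((hasDerivAt_id y).const_sub x).log hxy
  refine (((hasDerivAt_mul_arcsin_sub_sqrt_one_sub_sq x hy).add
    ((hasDerivAt_log_one_sub_mul_add_sqrt_mul_sqrt hx hy hyx).const_mul _)).sub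
    (hlog.const_mul _)).congr_deriv ?_
  field_simp
  linear_combination hs2 - hu2

theorem tendsto_truncFiniteHilbert_sqrt_one_sub_sq (hx : x ∈ Ioo (-1) 1) :
    Tendsto (truncFiniteHilbert (fun y => √(1 - y ^ 2)) x) (𝓝[>] 0) (𝓝 (π * x)) := by
  have hH : ContinuousOn (fun t => x * arcsin t - √(1 - t ^ 2)
      + √(1 - x ^ 2) * log (1 - x * t + √(1 - x ^ 2) * √(1 - t ^ 2))) (Icc (-1) 1) :=
    ContinuousOn.add (by fun_prop) (continuousOn_const.mul (ContinuousOn.log (by fun_prop)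
      fun t ht => (one_sub_mul_add_sqrt_mul_sqrt_pos hx ht).ne'))
  have hf : ContinuousOn (fun y => √(1 - y ^ 2) / (x - y)) (Icc (-1) 1 \ {x}) :=
    ContinuousOn.div (by fun_prop) (by fun_prop) fun y hy => sub_ne_zero.2 (Ne.symm hy.2)
  have hlim := tendsto_integral_add_integral_of_hasDerivAt_sub_log hx.1 hx.2 hH hf
    fun y hy hyx => hasDerivAt_primitive_sqrt_one_sub_sq_div_sub hx hy hyx
  have hlog : log (x - 1) = log (1 - x) := by rw [← log_neg_eq_log, neg_sub]
  convert hlim using 2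
  · rfl
  · simp only [arcsin_one, arcsin_neg, one_pow, even_two, Even.neg_pow, sub_self, sqrt_zero,
      mul_zero, add_zero, mul_one, mul_neg, sub_zero, sub_neg_eq_add, add_sub_cancel_right, hlog,
      add_comm x 1]
    ring

end SqrtOneSubSq

theorem integral_eval_U_mul_sqrt_one_sub_sq_eq_zero {n : ℤ} (hn : n ≠ 0) (hn2 : n + 2 ≠ 0) :
    ∫ y in (-1)..1, (U ℝ n).eval y * √(1 - y ^ 2) = 0 := by
  have hp : ∀ p : ℝ[X], Integrable (fun y => p.eval y) measureT := fun p =>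
    integrable_measureT p.continuous.continuousOn
  calc ∫ y in (-1)..1, (U ℝ n).eval y * √(1 - y ^ 2)
      = ∫ y, ((1 - X ^ 2) * U ℝ n).eval y ∂measureT := by
        rw [integral_measureT]
        refine integral_congr fun y _ => ?_
        simp only [eval_mul, eval_sub, eval_one, eval_pow, eval_X, sqrt_inv]
        rw [mul_comm (1 - y ^ 2), mul_assoc, ← div_eq_mul_inv, div_sqrt]
    _ = ∫ y, (T ℝ 1).eval y * (T ℝ (n + 1)).eval y ∂measureT
          - ∫ y, (T ℝ (n + 2)).eval y ∂measureT := by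
        rw [one_sub_X_sq_mul_U_eq_pol_in_T, T_one]
        simp only [eval_sub]
        rw [integral_sub (hp _) (hp _)]
        simp only [eval_mul]
    _ = 0 := by
      rw [integral_eval_T_real_mul_eval_T_real_measureT, show 1 + (n + 1) = n + 2 by ring,
        show 1 - (n + 1) = -n by ring, integral_eval_T_real_measureT_of_ne_zero hn2,
        integral_eval_T_real_measureT_of_ne_zero (neg_ne_zero.2 hn)]
      simp

theorem tendsto_truncFiniteHilbert_U_mul_sqrt_one_sub_sq {x : ℝ} (hx : x ∈ Ioo (-1) 1) (n : ℕ) :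
    Tendsto (truncFiniteHilbert (fun y => (U ℝ n).eval y * √(1 - y ^ 2)) x) (𝓝[>] 0)
      (𝓝 (π * (T ℝ (n + 1)).eval x)) := by
  have hw : Continuous fun y : ℝ => √(1 - y ^ 2) := by fun_prop
  have hUw : ∀ m : ℤ, Continuous fun y => (U ℝ m).eval y * √(1 - y ^ 2) := fun m =>
    (U ℝ m).continuous.mul hw
  induction n using Nat.twoStepInduction with
  | zero => simpa using tendsto_truncFiniteHilbert_sqrt_one_sub_sq hx
  | one =>
    have h := (tendsto_truncFiniteHilbert_mul_id hw hx
      (tendsto_truncFiniteHilbert_sqrt_one_sub_sq hx)).const_mul 2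
    rw [integral_sqrt_one_sub_sq] at h
    convert h using 2 with ε
    · rw [← truncFiniteHilbert_const_mul]
      simp only [Nat.cast_one, U_one, eval_mul, eval_ofNat, eval_X, mul_assoc]
    · rw [Nat.cast_one, one_add_one_eq_two, T_two]
      simp only [eval_sub, eval_mul, eval_ofNat, eval_pow, eval_X, eval_one]
      ring
  | more n ih0 ih1 =>
    have h := ((tendsto_truncFiniteHilbert_mul_id (hUw _) hx ih1).const_mul 2).sub ih0
    rw [integral_eval_U_mul_sqrt_one_sub_sq_eq_zero (n := ((n + 1 : ℕ) : ℤ)) (by omega) (by omega)]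
      at h
    have hU : U ℝ ((n + 2 : ℕ) : ℤ) = 2 * X * U ℝ ((n + 1 : ℕ) : ℤ) - U ℝ n := by
      push_cast
      exact U_add_two ℝ n
    have hT : T ℝ (((n + 2 : ℕ) : ℤ) + 1) = 2 * X * T ℝ (((n + 1 : ℕ) : ℤ) + 1) - T ℝ (n + 1) := by
      push_cast
      exact T_add_two ℝ (n + 1)
    rw [hT]
    convert h.congr' ?_ using 2
    · simp only [eval_sub, eval_mul, eval_ofNat, eval_X]
      ring
    filter_upwards [self_mem_nhdsWithin] with ε hε
    rw [← truncFiniteHilbert_const_mul, ← truncFiniteHilbert_sub ?_ (hUw _) hx hε]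
    · congr 1
      funext y
      simp only [hU, eval_sub, eval_mul, eval_ofNat, eval_X]
      ring
    · exact continuous_const.mul (continuous_id.mul (hUw _))


/-- For `k ≥ 1` and `x ∈ (-1,1)`, the Cauchy principal value
`(1/π) P.V. ∫_{-1}^1 T_k'(y) √(1-y²) / (x - y) dy = k · T_k(x)`,
formalized via symmetric truncation of the singularity at `y = x`. -/
theorem chebyshev_hilbert_transform (k : ℕ) (hk : 1 ≤ k) (x : ℝ)
    (hx : x ∈ Set.Ioo (-1 : ℝ) 1) :
    Tendsto (fun ε : ℝ =>
        (1 / Real.pi) *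
          ((∫ y in (-1 : ℝ)..(x - ε),
              (derivative (Chebyshev.T ℝ k)).eval y * Real.sqrt (1 - y ^ 2) / (x - y)) +
            ∫ y in (x + ε)..(1 : ℝ),
              (derivative (Chebyshev.T ℝ k)).eval y * Real.sqrt (1 - y ^ 2) / (x - y)))
      (nhdsWithin 0 (Set.Ioi 0))
      (nhds ((k : ℝ) * (Chebyshev.T ℝ k).eval x)) := by
  obtain ⟨m, rfl⟩ : ∃ m, k = m + 1 := ⟨k - 1, by omega⟩
  have hderiv : ∀ y, (derivative (T ℝ ((m + 1 : ℕ) : ℤ))).eval y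
      = ((m + 1 : ℕ) : ℝ) * (U ℝ m).eval y := fun y => by
    simp [T_derivative_eq_U]
  have h := ((tendsto_truncFiniteHilbert_U_mul_sqrt_one_sub_sq hx m).const_mul
    ((m + 1 : ℕ) : ℝ)).const_mul (1 / π)
  convert h using 2 with ε
  · rw [← truncFiniteHilbert_const_mul]
    simp only [truncFiniteHilbert, hderiv, mul_assoc]
  · field_simp
    push_cast
    ring
end

section
/- Let f : [-1,1] → ℝ be continuous and x ∈ (-1,1). With s(x) = √(1-x²) and H the Hilbert transform (H g)(x) = (1/π) P.V. ∫ g(y)/(x-y) dy, one has s(x)·[H(1_{(-1,1)} f/s)](x) = (1/s(x))·[H(1_{(-1,1)} f s)](x) − (1/π)∫_{-1}^{1} (x+y) f(y)/(s(x) s(y)) dy. -/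
open Filter MeasureTheory Set intervalIntegral

set_option maxHeartbeats 1000000

private lemma invsqrt_integrable :
    IntervalIntegrable (fun y : ℝ => 1 / Real.sqrt (1 - y ^ 2)) volume (-1) 1 := by
  have hmin : min (-1 : ℝ) 1 = -1 := by norm_num
  have hmax : max (-1 : ℝ) 1 = 1 := by norm_num
  refine intervalIntegrable_deriv_of_nonneg (g := Real.arcsin)
    Real.continuous_arcsin.continuousOn ?_ ?_
  · rw [hmin, hmax]
    intro y hy
    exact Real.hasDerivAt_arcsin (ne_of_gt hy.1) (ne_of_lt hy.2)
  · intro y hy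
    positivity

private lemma key_integrable (g : ℝ → ℝ) (a b : ℝ) (ha : -1 ≤ a) (hb : b ≤ 1) (hab : a ≤ b)
    (hmeas : AEStronglyMeasurable g (volume.restrict (Ioc a b)))
    (M : ℝ) (hM : ∀ y ∈ Ioc a b, |g y| ≤ M) :
    IntervalIntegrable (fun y => g y / Real.sqrt (1 - y ^ 2)) volume a b := by
  rw [intervalIntegrable_iff_integrableOn_Ioc_of_le hab]
  have hdom : IntegrableOn (fun y : ℝ => M * (1 / Real.sqrt (1 - y ^ 2))) (Ioc a b) volume := by
    have := (intervalIntegrable_iff_integrableOn_Ioc_of_le (by norm_num : (-1:ℝ) ≤ 1)).1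
      invsqrt_integrable
    exact (this.mono_set (Ioc_subset_Ioc ha hb)).const_mul M
  have hc : Continuous fun y : ℝ => Real.sqrt (1 - y ^ 2) :=
    Real.continuous_sqrt.comp (continuous_const.sub (continuous_pow 2))
  have hmeas2 : AEStronglyMeasurable (fun y => g y / Real.sqrt (1 - y ^ 2))
      (volume.restrict (Ioc a b)) :=
    (hmeas.aemeasurable.div hc.measurable.aemeasurable).aestronglyMeasurable
  refine Integrable.mono' hdom hmeas2 ?_
  filter_upwards [ae_restrict_mem measurableSet_Ioc] with y hy
  have h1 : (0:ℝ) ≤ 1 / Real.sqrt (1 - y ^ 2) := by positivity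
  have h2 : |g y| ≤ M := hM y hy
  have hM0 : 0 ≤ M := (abs_nonneg _).trans h2
  rw [Real.norm_eq_abs, abs_div, abs_of_nonneg (Real.sqrt_nonneg _), div_eq_mul_one_div]
  gcongr

private lemma pointwise_id (x y t : ℝ) (hxy : x - y ≠ 0) :
    (1 - x ^ 2) * (t / Real.sqrt (1 - y ^ 2) / (x - y))
        - t * Real.sqrt (1 - y ^ 2) / (x - y)
      = -((x + y) * t) / Real.sqrt (1 - y ^ 2) := by
  rcases eq_or_ne (Real.sqrt (1 - y ^ 2)) 0 with hs | hs
  · simp [hs]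
  · have h1 : 0 ≤ 1 - y ^ 2 := by
      by_contra hneg
      push_neg at hneg
      exact hs (Real.sqrt_eq_zero_of_nonpos hneg.le)
    have h2 : Real.sqrt (1 - y ^ 2) ^ 2 = 1 - y ^ 2 := Real.sq_sqrt h1
    field_simp
    linear_combination (-t) * h2

/-- For continuous `f : [-1,1] → ℝ` and `x ∈ (-1,1)`, with `s(x) = √(1-x²)` and
`H` the Hilbert transform (principal value), one has
`s(x)·H(1_{(-1,1)} f/s)(x) = (1/s(x))·H(1_{(-1,1)} f s)(x) − (1/π)∫_{-1}^1 (x+y)f(y)/(s(x)s(y)) dy`.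
The two Hilbert transforms are formalized as principal-value limits `A` and `B`. -/
theorem hilbert_transform_weight_identity (f : ℝ → ℝ)
    (hf : ContinuousOn f (Set.Icc (-1 : ℝ) 1))
    (x : ℝ) (hx : x ∈ Set.Ioo (-1 : ℝ) 1) (A B : ℝ)
    (hA : Tendsto (fun ε : ℝ =>
        (1 / Real.pi) *
          ((∫ y in (-1 : ℝ)..(x - ε), f y / Real.sqrt (1 - y ^ 2) / (x - y)) +
            ∫ y in (x + ε)..(1 : ℝ), f y / Real.sqrt (1 - y ^ 2) / (x - y)))
      (nhdsWithin 0 (Set.Ioi 0)) (nhds A))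
    (hB : Tendsto (fun ε : ℝ =>
        (1 / Real.pi) *
          ((∫ y in (-1 : ℝ)..(x - ε), f y * Real.sqrt (1 - y ^ 2) / (x - y)) +
            ∫ y in (x + ε)..(1 : ℝ), f y * Real.sqrt (1 - y ^ 2) / (x - y)))
      (nhdsWithin 0 (Set.Ioi 0)) (nhds B)) :
    Real.sqrt (1 - x ^ 2) * A
      = B / Real.sqrt (1 - x ^ 2)
        - (1 / Real.pi) * ∫ y in (-1 : ℝ)..1,
            (x + y) * f y / (Real.sqrt (1 - x ^ 2) * Real.sqrt (1 - y ^ 2)) := by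
  obtain ⟨hx1, hx2⟩ := hx
  have hπ : Real.pi ≠ 0 := Real.pi_ne_zero
  have hcpos : (0:ℝ) < 1 - x ^ 2 := by nlinarith
  have hsx : (0:ℝ) < Real.sqrt (1 - x ^ 2) := Real.sqrt_pos.2 hcpos
  set c : ℝ := 1 - x ^ 2 with hcdef
  -- bound on f
  obtain ⟨M, hM⟩ := isCompact_Icc.exists_bound_of_continuousOn hf
  have hM0 : 0 ≤ M := (norm_nonneg _).trans (hM x ⟨hx1.le, hx2.le⟩)
  -- measurability of f on subintervals
  have hmeasf : AEStronglyMeasurable f (volume.restrict (Icc (-1:ℝ) 1)) :=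
    hf.aestronglyMeasurable measurableSet_Icc
  have hfm : ∀ a b : ℝ, -1 ≤ a → b ≤ 1 →
      AEStronglyMeasurable f (volume.restrict (Ioc a b)) := by
    intro a b ha hb
    have hsub : Ioc a b ⊆ Icc (-1:ℝ) 1 := fun y hy =>
      ⟨le_trans ha hy.1.le, le_trans hy.2 hb⟩
    exact hmeasf.mono_measure (Measure.restrict_mono hsub le_rfl)
  -- the correction kernel
  set h : ℝ → ℝ := fun y => -((x + y) * f y) / Real.sqrt (1 - y ^ 2) with hhdef
  have hhint : IntervalIntegrable h volume (-1) 1 := by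
    refine key_integrable (fun y => -((x + y) * f y)) (-1) 1 le_rfl le_rfl (by norm_num)
      ?_ (2 * M) ?_
    · have hgc : Continuous fun y : ℝ => -(x + y) :=
        (continuous_const.add continuous_id).neg
      have := (hgc.measurable.aemeasurable.mul
        (hfm (-1) 1 le_rfl le_rfl).aemeasurable).aestronglyMeasurable
      exact this.congr (Eventually.of_forall fun y => by simp only [Pi.mul_apply]; ring)
    · intro y hy
      have h1 : |x + y| ≤ 2 := by
        rw [abs_le]; constructor <;> nlinarith [hy.1, hy.2]
      have h2 : |f y| ≤ M := by
        simpa using hM y ⟨hy.1.le, hy.2⟩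
      calc |-((x + y) * f y)| = |x + y| * |f y| := by rw [abs_neg, abs_mul]
        _ ≤ 2 * M := by gcongr
  have hxm : x ∈ uIcc (-1:ℝ) 1 := by
    rw [uIcc_of_le (by norm_num)]; exact ⟨hx1.le, hx2.le⟩
  have hI1i : IntervalIntegrable h volume (-1) x :=
    hhint.mono_set (uIcc_subset_uIcc left_mem_uIcc hxm)
  have hI2i : IntervalIntegrable h volume x 1 :=
    hhint.mono_set (uIcc_subset_uIcc hxm right_mem_uIcc)
  have hsplit : (∫ y in (-1:ℝ)..x, h y) + ∫ y in x..(1:ℝ), h y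
      = ∫ y in (-1:ℝ)..(1:ℝ), h y :=
    intervalIntegral.integral_add_adjacent_intervals hI1i hI2i
  -- continuity of primitives
  have hHIcc : IntegrableOn h (uIcc (-1:ℝ) 1) volume := by
    rw [uIcc_of_le (by norm_num), integrableOn_Icc_iff_integrableOn_Ioc]
    exact (intervalIntegrable_iff_integrableOn_Ioc_of_le (by norm_num)).1 hhint
  have hF : ContinuousOn (fun t => ∫ y in (-1:ℝ)..t, h y) (uIcc (-1:ℝ) 1) :=
    intervalIntegral.continuousOn_primitive_interval hHIcc
  have hG : ContinuousOn (fun t => ∫ y in t..(1:ℝ), h y) (uIcc (-1:ℝ) 1) :=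
    intervalIntegral.continuousOn_primitive_interval_left hHIcc
  -- the approach filter
  set δ : ℝ := min (x + 1) (1 - x) with hδdef
  have hδ : 0 < δ := by
    apply lt_min <;> linarith
  have hmem : Ioo (0:ℝ) δ ∈ nhdsWithin (0:ℝ) (Set.Ioi 0) :=
    Ioo_mem_nhdsGT_of_mem ⟨le_refl 0, hδ⟩
  have htendparam : Tendsto (fun ε : ℝ => x - ε) (nhdsWithin 0 (Set.Ioi 0))
      (nhdsWithin x (uIcc (-1:ℝ) 1)) := by
    refine tendsto_nhdsWithin_of_tendsto_nhds_of_eventually_within _ ?_ ?_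
    · have : Tendsto (fun ε : ℝ => x - ε) (nhdsWithin 0 (Set.Ioi 0)) (nhds (x - 0)) :=
        tendsto_const_nhds.sub (tendsto_id.mono_left nhdsWithin_le_nhds)
      simpa using this
    · filter_upwards [hmem] with ε hε
      rw [uIcc_of_le (by norm_num : (-1:ℝ) ≤ 1)]
      have h1 : ε < x + 1 := lt_of_lt_of_le hε.2 (min_le_left _ _)
      exact ⟨by linarith, by linarith [hε.1]⟩
  have htendparam2 : Tendsto (fun ε : ℝ => x + ε) (nhdsWithin 0 (Set.Ioi 0))
      (nhdsWithin x (uIcc (-1:ℝ) 1)) := by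
    refine tendsto_nhdsWithin_of_tendsto_nhds_of_eventually_within _ ?_ ?_
    · have : Tendsto (fun ε : ℝ => x + ε) (nhdsWithin 0 (Set.Ioi 0)) (nhds (x + 0)) :=
        tendsto_const_nhds.add (tendsto_id.mono_left nhdsWithin_le_nhds)
      simpa using this
    · filter_upwards [hmem] with ε hε
      rw [uIcc_of_le (by norm_num : (-1:ℝ) ≤ 1)]
      have h1 : ε < 1 - x := lt_of_lt_of_le hε.2 (min_le_right _ _)
      exact ⟨by linarith [hε.1], by linarith⟩
  have htend1 : Tendsto (fun ε : ℝ => ∫ y in (-1:ℝ)..(x - ε), h y)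
      (nhdsWithin 0 (Set.Ioi 0)) (nhds (∫ y in (-1:ℝ)..x, h y)) :=
    (hF x hxm).tendsto.comp htendparam
  have htend2 : Tendsto (fun ε : ℝ => ∫ y in (x + ε)..(1:ℝ), h y)
      (nhdsWithin 0 (Set.Ioi 0)) (nhds (∫ y in x..(1:ℝ), h y)) :=
    (hG x hxm).tendsto.comp htendparam2
  have hΦ2 : Tendsto (fun ε : ℝ => (1 / Real.pi) *
      ((∫ y in (-1:ℝ)..(x - ε), h y) + ∫ y in (x + ε)..(1:ℝ), h y))
      (nhdsWithin 0 (Set.Ioi 0))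
      (nhds ((1 / Real.pi) * ∫ y in (-1:ℝ)..(1:ℝ), h y)) := by
    rw [← hsplit]
    exact (htend1.add htend2).const_mul _
  -- generic piece computation
  have piece : ∀ a b e : ℝ, -1 ≤ a → b ≤ 1 → a ≤ b → 0 < e →
      (∀ y ∈ Icc a b, x - y ≠ 0) → (∀ y ∈ Ioc a b, e ≤ |x - y|) →
      c * (∫ y in a..b, f y / Real.sqrt (1 - y ^ 2) / (x - y))
          - ∫ y in a..b, f y * Real.sqrt (1 - y ^ 2) / (x - y)
        = ∫ y in a..b, h y := by
    intro a b e ha hb hab he0 hne hebd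
    have hu : IntervalIntegrable (fun y => f y / Real.sqrt (1 - y ^ 2) / (x - y))
        volume a b := by
      have key := key_integrable (fun y => f y / (x - y)) a b ha hb hab
        (((hfm a b ha hb).aemeasurable.div
          ((continuous_const.sub continuous_id).measurable.aemeasurable)
          ).aestronglyMeasurable)
        (M / e) ?_
      · have heqfun : (fun y => f y / Real.sqrt (1 - y ^ 2) / (x - y))
            = fun y => (f y / (x - y)) / Real.sqrt (1 - y ^ 2) := by
          funext y; rw [div_right_comm]
        rw [heqfun]; exact key
      · intro y hy
        have h2 : |f y| ≤ M := by
          simpa using hM y ⟨le_trans ha hy.1.le, le_trans hy.2 hb⟩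
        rw [abs_div]
        exact div_le_div₀ hM0 h2 he0 (hebd y hy)
    have hccont : Continuous fun y : ℝ => Real.sqrt (1 - y ^ 2) :=
      Real.continuous_sqrt.comp (continuous_const.sub (continuous_pow 2))
    have hsub : uIcc a b ⊆ Icc (-1:ℝ) 1 := by
      rw [uIcc_of_le hab]
      exact Icc_subset_Icc ha hb
    have hv : IntervalIntegrable (fun y => f y * Real.sqrt (1 - y ^ 2) / (x - y))
        volume a b := by
      apply ContinuousOn.intervalIntegrable
      refine ContinuousOn.div ?_ ((continuous_const.sub continuous_id).continuousOn) ?_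
      · exact ((hf.mono hsub).mul hccont.continuousOn)
      · intro y hy
        rw [uIcc_of_le hab] at hy
        exact hne y hy
    rw [← intervalIntegral.integral_const_mul, ← intervalIntegral.integral_sub
      (hu.const_mul c) hv]
    apply intervalIntegral.integral_congr
    intro y hy
    rw [uIcc_of_le hab] at hy
    simp only [hhdef, hcdef]
    exact pointwise_id x y (f y) (hne y hy)
  -- eventual equality
  have heq : ∀ ε ∈ Ioo (0:ℝ) δ,
      c * ((1 / Real.pi) *
          ((∫ y in (-1 : ℝ)..(x - ε), f y / Real.sqrt (1 - y ^ 2) / (x - y)) +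
            ∫ y in (x + ε)..(1 : ℝ), f y / Real.sqrt (1 - y ^ 2) / (x - y)))
        - (1 / Real.pi) *
          ((∫ y in (-1 : ℝ)..(x - ε), f y * Real.sqrt (1 - y ^ 2) / (x - y)) +
            ∫ y in (x + ε)..(1 : ℝ), f y * Real.sqrt (1 - y ^ 2) / (x - y))
      = (1 / Real.pi) *
          ((∫ y in (-1:ℝ)..(x - ε), h y) + ∫ y in (x + ε)..(1:ℝ), h y) := by
    intro ε hε
    obtain ⟨hε0, hεδ⟩ := hε
    have hεa : -1 < x - ε := by
      have := lt_of_lt_of_le hεδ (min_le_left _ _); linarith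
    have hεb : x + ε < 1 := by
      have := lt_of_lt_of_le hεδ (min_le_right _ _); linarith
    have hp1 := piece (-1) (x - ε) ε le_rfl (by linarith) (by linarith) hε0
      (fun y hy => by have := hy.2; intro hcon; nlinarith)
      (fun y hy => by
        have h1 : x - y ≥ ε := by linarith [hy.2]
        rw [abs_of_pos (by linarith)]; exact h1)
    have hp2 := piece (x + ε) 1 ε (by linarith) le_rfl (by linarith) hε0
      (fun y hy => by have := hy.1; intro hcon; nlinarith)
      (fun y hy => by
        have h1 : x - y ≤ -ε := by linarith [hy.1]
        rw [abs_of_neg (by linarith)]; linarith)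
    rw [← hp1, ← hp2]
    ring
  -- identify the limit
  have hΦ1 : Tendsto (fun ε : ℝ =>
      c * ((1 / Real.pi) *
          ((∫ y in (-1 : ℝ)..(x - ε), f y / Real.sqrt (1 - y ^ 2) / (x - y)) +
            ∫ y in (x + ε)..(1 : ℝ), f y / Real.sqrt (1 - y ^ 2) / (x - y)))
        - (1 / Real.pi) *
          ((∫ y in (-1 : ℝ)..(x - ε), f y * Real.sqrt (1 - y ^ 2) / (x - y)) +
            ∫ y in (x + ε)..(1 : ℝ), f y * Real.sqrt (1 - y ^ 2) / (x - y)))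
      (nhdsWithin 0 (Set.Ioi 0)) (nhds (c * A - B)) := (hA.const_mul c).sub hB
  have hΦ2' : Tendsto (fun ε : ℝ =>
      c * ((1 / Real.pi) *
          ((∫ y in (-1 : ℝ)..(x - ε), f y / Real.sqrt (1 - y ^ 2) / (x - y)) +
            ∫ y in (x + ε)..(1 : ℝ), f y / Real.sqrt (1 - y ^ 2) / (x - y)))
        - (1 / Real.pi) *
          ((∫ y in (-1 : ℝ)..(x - ε), f y * Real.sqrt (1 - y ^ 2) / (x - y)) +
            ∫ y in (x + ε)..(1 : ℝ), f y * Real.sqrt (1 - y ^ 2) / (x - y)))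
      (nhdsWithin 0 (Set.Ioi 0))
      (nhds ((1 / Real.pi) * ∫ y in (-1:ℝ)..(1:ℝ), h y)) := by
    refine hΦ2.congr' ?_
    filter_upwards [hmem] with ε hε
    exact (heq ε hε).symm
  have hkey : c * A - B = (1 / Real.pi) * ∫ y in (-1:ℝ)..(1:ℝ), h y :=
    tendsto_nhds_unique hΦ1 hΦ2'
  -- final algebra
  have h3 : (∫ y in (-1:ℝ)..1,
        (x + y) * f y / (Real.sqrt c * Real.sqrt (1 - y ^ 2)))
      = (Real.sqrt c)⁻¹ * (-(∫ y in (-1:ℝ)..(1:ℝ), h y)) := by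
    rw [← intervalIntegral.integral_neg, ← intervalIntegral.integral_const_mul]
    apply intervalIntegral.integral_congr
    intro y _
    simp only [hhdef]
    ring
  have hI : (∫ y in (-1:ℝ)..(1:ℝ), h y) = Real.pi * (c * A - B) := by
    rw [hkey]; field_simp
  have hss : Real.sqrt c * Real.sqrt c = c := Real.mul_self_sqrt hcpos.le
  have hsx' : Real.sqrt c ≠ 0 := ne_of_gt hsx
  rw [h3, hI]
  field_simp
  linear_combination A * hss
end

section
/- Let a(z) = (z-1)^{1/4}/(z+1)^{1/4} with principal branch powers for z ∉ [-1,1], let x ∈ (-1,1), and let a₊(x) denote the boundary value of a from the upper half plane. Then a(z)²/a₊(x)² + a₊(x)²/a(z)² = 2i(1 - xz) / ( (z-1)^{1/2}(z+1)^{1/2} √(1-x²) ) and a(z)²/a₊(x)² − a₊(x)²/a(z)² = 2i(x - z) / ( (z-1)^{1/2}(z+1)^{1/2} √(1-x²) ) for all z ∉ [-1,1]. -/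
open Complex

/-- With `a(z) = (z-1)^{1/4}/(z+1)^{1/4}` (principal branches) and
`a₊(x)² = i √((1-x)/(1+x))` the boundary value from the upper half plane at
`x ∈ (-1,1)`, for all `z ∉ [-1,1]`:
`a(z)²/a₊(x)² + a₊(x)²/a(z)² = 2i(1-xz)/((z-1)^{1/2}(z+1)^{1/2}√(1-x²))` and
`a(z)²/a₊(x)² − a₊(x)²/a(z)² = 2i(x-z)/((z-1)^{1/2}(z+1)^{1/2}√(1-x²))`. -/
theorem a_function_identities (x : ℝ) (hx : x ∈ Set.Ioo (-1 : ℝ) 1) (z : ℂ)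
    (hz : z ∉ (fun t : ℝ => (t : ℂ)) '' Set.Icc (-1 : ℝ) 1) :
    (((z - 1) ^ ((1 : ℂ) / 4) / (z + 1) ^ ((1 : ℂ) / 4)) ^ 2 /
          (Complex.I * (Real.sqrt ((1 - x) / (1 + x)) : ℂ)) +
        (Complex.I * (Real.sqrt ((1 - x) / (1 + x)) : ℂ)) /
          ((z - 1) ^ ((1 : ℂ) / 4) / (z + 1) ^ ((1 : ℂ) / 4)) ^ 2
      = 2 * Complex.I * (1 - (x : ℂ) * z) /
          ((z - 1) ^ ((1 : ℂ) / 2) * (z + 1) ^ ((1 : ℂ) / 2) *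
            (Real.sqrt (1 - x ^ 2) : ℂ))) ∧
    (((z - 1) ^ ((1 : ℂ) / 4) / (z + 1) ^ ((1 : ℂ) / 4)) ^ 2 /
          (Complex.I * (Real.sqrt ((1 - x) / (1 + x)) : ℂ)) -
        (Complex.I * (Real.sqrt ((1 - x) / (1 + x)) : ℂ)) /
          ((z - 1) ^ ((1 : ℂ) / 4) / (z + 1) ^ ((1 : ℂ) / 4)) ^ 2
      = 2 * Complex.I * ((x : ℂ) - z) /
          ((z - 1) ^ ((1 : ℂ) / 2) * (z + 1) ^ ((1 : ℂ) / 2) *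
            (Real.sqrt (1 - x ^ 2) : ℂ))) := by
  obtain ⟨hx1, hx2⟩ := hx
  have hx1p : (0 : ℝ) < 1 + x := by linarith
  have hx2p : (0 : ℝ) < 1 - x := by linarith
  have hzm : z - 1 ≠ 0 := by
    intro h
    exact hz ⟨1, by norm_num, by simpa using (sub_eq_zero.mp h).symm⟩
  have hzp : z + 1 ≠ 0 := by
    intro h
    refine hz ⟨-1, by norm_num, ?_⟩
    push_cast
    linear_combination -h
  have hA4 : ((z - 1) ^ ((1 : ℂ) / 4)) ^ 2 = (z - 1) ^ ((1 : ℂ) / 2) := by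
    rw [sq, ← Complex.cpow_add _ _ hzm]; norm_num
  have hB4 : ((z + 1) ^ ((1 : ℂ) / 4)) ^ 2 = (z + 1) ^ ((1 : ℂ) / 2) := by
    rw [sq, ← Complex.cpow_add _ _ hzp]; norm_num
  set A := (z - 1) ^ ((1 : ℂ) / 2) with hAdef
  set B := (z + 1) ^ ((1 : ℂ) / 2) with hBdef
  have hA2 : A ^ 2 = z - 1 := by
    rw [hAdef, sq, ← Complex.cpow_add _ _ hzm]; norm_num
  have hB2 : B ^ 2 = z + 1 := by
    rw [hBdef, sq, ← Complex.cpow_add _ _ hzp]; norm_num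
  have hA0 : A ≠ 0 := by
    intro h; apply hzm; rw [← hA2, h]; ring
  have hB0 : B ≠ 0 := by
    intro h; apply hzp; rw [← hB2, h]; ring
  set s : ℝ := Real.sqrt ((1 - x) / (1 + x)) with hsdef
  have hs0 : 0 < s := Real.sqrt_pos.mpr (by positivity)
  have hs2 : s ^ 2 = (1 - x) / (1 + x) := Real.sq_sqrt (by positivity)
  have hsq : Real.sqrt (1 - x ^ 2) = s * (1 + x) := by
    rw [hsdef, ← Real.sqrt_sq hx1p.le, ← Real.sqrt_mul (by positivity)]
    congr 1
    rw [Real.sqrt_sq hx1p.le]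
    field_simp
    ring
  have hc2 : (s : ℂ) ^ 2 * (1 + (x : ℂ)) = 1 - (x : ℂ) := by
    have : (s : ℝ) ^ 2 * (1 + x) = 1 - x := by
      rw [hs2]; field_simp
    exact_mod_cast congrArg (fun t : ℝ => (t : ℂ)) this
  have hcs0 : (s : ℂ) ≠ 0 := by exact_mod_cast hs0.ne'
  rw [div_pow, hA4, hB4, hsq]
  push_cast
  have hx0 : (1 : ℂ) + (x : ℂ) ≠ 0 := by
    exact_mod_cast (show ((1+x:ℝ):ℂ) ≠ 0 by exact_mod_cast hx1p.ne')
  have hI : Complex.I ^ 2 = -1 := Complex.I_sq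
  constructor
  · field_simp
    linear_combination (1+(x:ℂ))*hA2 + (Complex.I^2*B^2)*hc2
      + (Complex.I^2*(1-(x:ℂ)))*hB2
      + ((1+(x:ℂ))*(z-1))*hI
  · field_simp
    linear_combination (1+(x:ℂ))*hA2 - (Complex.I^2*B^2)*hc2
      - (Complex.I^2*(1-(x:ℂ)))*hB2
      + ((1+(x:ℂ))*(z-1))*hI
end

section
/- For z ∉ [-1,1] and x ∈ (-1,1), with a(z) = (z-1)^{1/4}/(z+1)^{1/4} (principal branches): (1/(x−z)²)·[a(z)²/a₊(x)² + a₊(x)²/a(z)²] = (2i/√(1−x²)) · d/dz [ (z−1)^{1/2}(z+1)^{1/2} / (z−x) ], and (1/(x−z)²)·[a(z)²/a₊(x)² − a₊(x)²/a(z)²] = (2i/√(1−x²)) · 1/((x−z)(z−1)^{1/2}(z+1)^{1/2}). -/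
open Complex

private lemma half_sq {w : ℂ} (hw : w ≠ 0) : (w ^ ((1:ℂ)/2)) ^ 2 = w := by
  rw [sq, ← cpow_add _ _ hw]; norm_num

private lemma quarter_sq {w : ℂ} (hw : w ≠ 0) : (w ^ ((1:ℂ)/4)) ^ 2 = w ^ ((1:ℂ)/2) := by
  rw [sq, ← cpow_add _ _ hw]; norm_num

private lemma half_ne_zero {w : ℂ} (hw : w ≠ 0) : w ^ ((1:ℂ)/2) ≠ 0 := by
  simp [cpow_eq_zero_iff, hw]

private lemma exp_pi_div_two_mul_I : Complex.exp ((↑Real.pi * I) * (1/2)) = I := by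
  rw [show (↑Real.pi * I) * (1/2 : ℂ) = (↑(Real.pi/2)) * I by push_cast; ring,
    Complex.exp_mul_I]
  push_cast
  rw [Complex.cos_pi_div_two, Complex.sin_pi_div_two]
  ring

private lemma exp_neg_pi_div_two_mul_I : Complex.exp ((-(↑Real.pi * I)) * (1/2)) = -I := by
  rw [show (-(↑Real.pi * I)) * (1/2 : ℂ) = (↑(-(Real.pi/2))) * I by push_cast; ring,
    Complex.exp_mul_I]
  push_cast
  rw [Complex.cos_neg, Complex.sin_neg, Complex.cos_pi_div_two, Complex.sin_pi_div_two]
  ring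

private lemma half_neg {u : ℂ} (hre : u.re < 0) :
    u ^ ((1:ℂ)/2) = (if 0 ≤ u.im then I else -I) * (-u) ^ ((1:ℂ)/2) := by
  have hu : u ≠ 0 := fun h => by simp [h] at hre
  have hnu : -u ≠ 0 := neg_ne_zero.mpr hu
  rw [cpow_def_of_ne_zero hu, cpow_def_of_ne_zero hnu]
  have habs : ‖-u‖ = ‖u‖ := by simp
  rcases lt_or_ge u.im 0 with him | him
  · have harg : arg (-u) = arg u + Real.pi := arg_neg_eq_arg_add_pi_of_im_neg him
    have hlog : Complex.log u = Complex.log (-u) + (-(↑Real.pi * I)) := by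
      rw [Complex.log, Complex.log, habs, harg]; push_cast; ring
    rw [if_neg (not_le.mpr him), hlog, add_mul, Complex.exp_add, _root_.exp_neg_pi_div_two_mul_I]
    ring
  · have harg : arg (-u) = arg u - Real.pi := by
      rcases lt_or_eq_of_le him with him' | him'
      · exact arg_neg_eq_arg_sub_pi_of_im_pos him'
      · have hpi : arg u = Real.pi := by
          rw [Complex.arg_eq_pi_iff]; exact ⟨hre, him'.symm⟩
        have : arg (-u) = 0 := by
          rw [Complex.arg_eq_zero_iff]
          constructor
          · simpa using hre.le
          · simpa using him'.symm
        rw [this, hpi]; ring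
    have hlog : Complex.log u = Complex.log (-u) + (↑Real.pi * I) := by
      rw [Complex.log, Complex.log, habs, harg]; push_cast; ring
    rw [if_pos him, hlog, add_mul, Complex.exp_add, _root_.exp_pi_div_two_mul_I]
    ring


private lemma prod_half_neg {w : ℂ} (hw : w.re < -1) :
    (w-1) ^ ((1:ℂ)/2) * (w+1) ^ ((1:ℂ)/2)
      = -((1-w) ^ ((1:ℂ)/2) * (-1-w) ^ ((1:ℂ)/2)) := by
  have h1 : (w-1).re < 0 := by simp [Complex.sub_re]; linarith
  have h2 : (w+1).re < 0 := by simp [Complex.add_re]; linarith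
  rw [half_neg h1, half_neg h2]
  have e1 : -(w-1) = 1-w := by ring
  have e2 : -(w+1) = -1-w := by ring
  rw [e1, e2]
  have him : (w-1).im = w.im ∧ (w+1).im = w.im := by simp
  rcases le_or_gt 0 w.im with h | h
  · rw [if_pos (by simp [h] : (0:ℝ) ≤ (w-1).im), if_pos (by simp [h] : (0:ℝ) ≤ (w+1).im)]
    rw [show I * (1-w)^((1:ℂ)/2) * (I * (-1-w)^((1:ℂ)/2))
        = I^2 * ((1-w)^((1:ℂ)/2) * (-1-w)^((1:ℂ)/2)) by ring, Complex.I_sq]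
    ring
  · rw [if_neg (by simp [h, not_le] : ¬ (0:ℝ) ≤ (w-1).im),
      if_neg (by simp [h, not_le] : ¬ (0:ℝ) ≤ (w+1).im)]
    rw [show -I * (1-w)^((1:ℂ)/2) * (-I * (-1-w)^((1:ℂ)/2))
        = I^2 * ((1-w)^((1:ℂ)/2) * (-1-w)^((1:ℂ)/2)) by ring, Complex.I_sq]
    ring

private lemma hasDerivAt_F {z : ℂ} (hcond : z.im ≠ 0 ∨ 1 < z.re ∨ z.re < -1)
    (hm : z - 1 ≠ 0) (hp : z + 1 ≠ 0) :
    HasDerivAt (fun w : ℂ => (w-1) ^ ((1:ℂ)/2) * (w+1) ^ ((1:ℂ)/2))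
      (z * ((z-1) ^ ((1:ℂ)/2) * (z+1) ^ ((1:ℂ)/2))⁻¹) z := by
  have hA0 : (z-1) ^ ((1:ℂ)/2) ≠ 0 := half_ne_zero hm
  have hB0 : (z+1) ^ ((1:ℂ)/2) ≠ 0 := half_ne_zero hp
  have hA2 : ((z-1) ^ ((1:ℂ)/2))^2 = z - 1 := half_sq hm
  have hB2 : ((z+1) ^ ((1:ℂ)/2))^2 = z + 1 := half_sq hp
  by_cases hgood : z.im ≠ 0 ∨ 1 < z.re
  · have hs1 : z - 1 ∈ Complex.slitPlane := by
      rcases hgood with h | h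
      · exact Or.inr (by simpa using h)
      · exact Or.inl (by simp; linarith)
    have hs2 : z + 1 ∈ Complex.slitPlane := by
      rcases hgood with h | h
      · exact Or.inr (by simpa using h)
      · exact Or.inl (by simp; linarith)
    have d1 : HasDerivAt (fun w : ℂ => (w-1) ^ ((1:ℂ)/2))
        ((1/2 : ℂ) * (z-1) ^ ((1:ℂ)/2 - 1) * 1) z :=
      ((hasDerivAt_id z).sub_const 1).cpow_const hs1
    have d2 : HasDerivAt (fun w : ℂ => (w+1) ^ ((1:ℂ)/2))
        ((1/2 : ℂ) * (z+1) ^ ((1:ℂ)/2 - 1) * 1) z :=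
      ((hasDerivAt_id z).add_const 1).cpow_const hs2
    have := d1.mul d2
    refine this.congr_deriv ?_
    symm
    have em : (z-1) ^ ((1:ℂ)/2 - 1) = ((z-1) ^ ((1:ℂ)/2)) * (z-1)⁻¹ := by
      rw [show (1:ℂ)/2 - 1 = 1/2 + (-1) by ring, cpow_add _ _ hm, cpow_neg, cpow_one]
    have ep : (z+1) ^ ((1:ℂ)/2 - 1) = ((z+1) ^ ((1:ℂ)/2)) * (z+1)⁻¹ := by
      rw [show (1:ℂ)/2 - 1 = 1/2 + (-1) by ring, cpow_add _ _ hp, cpow_neg, cpow_one]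
    set A := (z-1) ^ ((1:ℂ)/2) with hA
    set B := (z+1) ^ ((1:ℂ)/2) with hB
    rw [em, ep, ← hA2, ← hB2]
    field_simp
    linear_combination (-1) * hA2 + (-1) * hB2
  · push_neg at hgood
    obtain ⟨him, hre⟩ := hgood
    have hlt : z.re < -1 := by
      rcases hcond with h | h | h
      · exact absurd him h
      · linarith
      · exact h
    -- the alternative branch function
    have hs1 : (1 - z) ∈ Complex.slitPlane := Or.inl (by simp; linarith)
    have hs2 : (-1 - z) ∈ Complex.slitPlane := Or.inl (by simp; linarith)
    have d1 : HasDerivAt (fun w : ℂ => (1-w) ^ ((1:ℂ)/2))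
        ((1/2 : ℂ) * (1-z) ^ ((1:ℂ)/2 - 1) * (-1)) z :=
      ((hasDerivAt_id z).const_sub 1).cpow_const hs1
    have d2 : HasDerivAt (fun w : ℂ => (-1-w) ^ ((1:ℂ)/2))
        ((1/2 : ℂ) * (-1-z) ^ ((1:ℂ)/2 - 1) * (-1)) z :=
      ((hasDerivAt_id z).const_sub (-1)).cpow_const hs2
    have dG : HasDerivAt (fun w : ℂ => -((1-w) ^ ((1:ℂ)/2) * (-1-w) ^ ((1:ℂ)/2)))
        (-((1/2 : ℂ) * (1-z) ^ ((1:ℂ)/2 - 1) * (-1) * ((-1-z) ^ ((1:ℂ)/2))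
          + ((1-z) ^ ((1:ℂ)/2)) * ((1/2 : ℂ) * (-1-z) ^ ((1:ℂ)/2 - 1) * (-1)))) z :=
      (d1.mul d2).neg
    have heq : (fun w : ℂ => (w-1) ^ ((1:ℂ)/2) * (w+1) ^ ((1:ℂ)/2))
        =ᶠ[nhds z] (fun w : ℂ => -((1-w) ^ ((1:ℂ)/2) * (-1-w) ^ ((1:ℂ)/2))) := by
      have hopen : IsOpen {w : ℂ | w.re < -1} := isOpen_lt Complex.continuous_re continuous_const
      filter_upwards [hopen.mem_nhds hlt] with w hw
      exact prod_half_neg hw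
    have dF := dG.congr_of_eventuallyEq heq
    refine dF.congr_deriv ?_
    symm
    have hm' : (1 : ℂ) - z ≠ 0 := fun h => hm (by linear_combination -h)
    have hp' : (-1 : ℂ) - z ≠ 0 := fun h => hp (by linear_combination -h)
    have hC0 : (1-z) ^ ((1:ℂ)/2) ≠ 0 := half_ne_zero hm'
    have hD0 : (-1-z) ^ ((1:ℂ)/2) ≠ 0 := half_ne_zero hp'
    have hC2 : ((1-z) ^ ((1:ℂ)/2))^2 = 1 - z := half_sq hm'
    have hD2 : ((-1-z) ^ ((1:ℂ)/2))^2 = -1 - z := half_sq hp'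
    have hFz : (z-1) ^ ((1:ℂ)/2) * (z+1) ^ ((1:ℂ)/2)
        = -((1-z) ^ ((1:ℂ)/2) * (-1-z) ^ ((1:ℂ)/2)) := prod_half_neg hlt
    rw [hFz]
    have em : (1-z) ^ ((1:ℂ)/2 - 1) = ((1-z) ^ ((1:ℂ)/2)) * (1-z)⁻¹ := by
      rw [show (1:ℂ)/2 - 1 = 1/2 + (-1) by ring, cpow_add _ _ hm', cpow_neg, cpow_one]
    have ep : (-1-z) ^ ((1:ℂ)/2 - 1) = ((-1-z) ^ ((1:ℂ)/2)) * (-1-z)⁻¹ := by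
      rw [show (1:ℂ)/2 - 1 = 1/2 + (-1) by ring, cpow_add _ _ hp', cpow_neg, cpow_one]
    set C := (1-z) ^ ((1:ℂ)/2) with hC
    set D := (-1-z) ^ ((1:ℂ)/2) with hD
    rw [em, ep, ← hC2, ← hD2]
    field_simp
    linear_combination (-1) * hC2 + (-1) * hD2


set_option maxHeartbeats 2000000 in
/-- For `z ∉ [-1,1]`, `x ∈ (-1,1)`, with `a(z) = (z-1)^{1/4}/(z+1)^{1/4}` and
`a₊(x)² = i √((1-x)/(1+x))` (principal branches):
`(1/(x−z)²)[a(z)²/a₊(x)² + a₊(x)²/a(z)²] = (2i/√(1−x²)) d/dz[(z−1)^{1/2}(z+1)^{1/2}/(z−x)]`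
and
`(1/(x−z)²)[a(z)²/a₊(x)² − a₊(x)²/a(z)²] = (2i/√(1−x²)) · 1/((x−z)(z−1)^{1/2}(z+1)^{1/2})`. -/
theorem a_function_derivative_identities (x : ℝ) (hx : x ∈ Set.Ioo (-1 : ℝ) 1)
    (z : ℂ) (hz : z ∉ (fun t : ℝ => (t : ℂ)) '' Set.Icc (-1 : ℝ) 1) :
    ((1 / ((x : ℂ) - z) ^ 2) *
        (((z - 1) ^ ((1 : ℂ) / 4) / (z + 1) ^ ((1 : ℂ) / 4)) ^ 2 /
            (Complex.I * (Real.sqrt ((1 - x) / (1 + x)) : ℂ)) +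
          (Complex.I * (Real.sqrt ((1 - x) / (1 + x)) : ℂ)) /
            ((z - 1) ^ ((1 : ℂ) / 4) / (z + 1) ^ ((1 : ℂ) / 4)) ^ 2)
      = (2 * Complex.I / (Real.sqrt (1 - x ^ 2) : ℂ)) *
          deriv (fun w : ℂ =>
            (w - 1) ^ ((1 : ℂ) / 2) * (w + 1) ^ ((1 : ℂ) / 2) / (w - (x : ℂ))) z) ∧
    ((1 / ((x : ℂ) - z) ^ 2) *
        (((z - 1) ^ ((1 : ℂ) / 4) / (z + 1) ^ ((1 : ℂ) / 4)) ^ 2 /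
            (Complex.I * (Real.sqrt ((1 - x) / (1 + x)) : ℂ)) -
          (Complex.I * (Real.sqrt ((1 - x) / (1 + x)) : ℂ)) /
            ((z - 1) ^ ((1 : ℂ) / 4) / (z + 1) ^ ((1 : ℂ) / 4)) ^ 2)
      = (2 * Complex.I / (Real.sqrt (1 - x ^ 2) : ℂ)) *
          (1 / (((x : ℂ) - z) * (z - 1) ^ ((1 : ℂ) / 2) * (z + 1) ^ ((1 : ℂ) / 2)))) := by
  obtain ⟨hx1, hx2⟩ := hx
  have hne : ∀ t : ℝ, t ∈ Set.Icc (-1 : ℝ) 1 → z ≠ (t : ℂ) := fun t ht h => hz ⟨t, ht, h.symm⟩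
  have hzm : z - 1 ≠ 0 := sub_ne_zero.mpr (by simpa using hne 1 (by norm_num))
  have hzp : z + 1 ≠ 0 := by
    have := hne (-1) (by norm_num)
    intro h; apply this; push_cast; linear_combination h
  have hzx : z - (x : ℂ) ≠ 0 := sub_ne_zero.mpr (hne x ⟨hx1.le, hx2.le⟩)
  have hxz : (x : ℂ) - z ≠ 0 := fun h => hzx (by linear_combination -h)
  have hcond : z.im ≠ 0 ∨ 1 < z.re ∨ z.re < -1 := by
    by_contra h
    push_neg at h
    obtain ⟨h1, h2, h3⟩ := h
    exact hz ⟨z.re, ⟨h3, h2⟩, by apply Complex.ext <;> simp [h1]⟩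
  -- real square-root facts
  have hx0 : (0:ℝ) < 1 + x := by linarith
  have hx1' : (0:ℝ) < 1 - x := by linarith
  set s : ℝ := Real.sqrt ((1 - x) / (1 + x)) with hs_def
  have hspos : 0 < s := Real.sqrt_pos.mpr (div_pos hx1' hx0)
  have hs2 : (1 + x) * s ^ 2 = 1 - x := by
    rw [hs_def, Real.sq_sqrt (div_pos hx1' hx0).le]
    field_simp
  have hsqrt : Real.sqrt (1 - x ^ 2) = (1 + x) * s := by
    rw [show (1 : ℝ) - x ^ 2 = (1 + x) ^ 2 * ((1 - x) / (1 + x)) by field_simp; ring,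
      Real.sqrt_mul (sq_nonneg _), Real.sqrt_sq hx0.le, hs_def]
  have hsqrtC : ((Real.sqrt (1 - x ^ 2) : ℝ) : ℂ) = ((1 : ℂ) + x) * (s : ℂ) := by
    rw [hsqrt]; push_cast; ring
  have hs2C : ((1 : ℂ) + x) * (s : ℂ) ^ 2 = 1 - x := by
    have := congrArg (Complex.ofReal) hs2
    push_cast at this
    linear_combination this
  have hsC0 : (s : ℂ) ≠ 0 := by exact_mod_cast hspos.ne'
  have hx0C : ((1 : ℂ) + x) ≠ 0 := by
    intro h
    have : ((1 + x : ℝ) : ℂ) = 0 := by push_cast; linear_combination h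
    exact hx0.ne' (by exact_mod_cast this)
  -- complex power facts
  have hA2 : ((z - 1) ^ ((1:ℂ)/2)) ^ 2 = z - 1 := half_sq hzm
  have hB2 : ((z + 1) ^ ((1:ℂ)/2)) ^ 2 = z + 1 := half_sq hzp
  have hA0 : (z - 1) ^ ((1:ℂ)/2) ≠ 0 := half_ne_zero hzm
  have hB0 : (z + 1) ^ ((1:ℂ)/2) ≠ 0 := half_ne_zero hzp
  have hQ : ((z - 1) ^ ((1:ℂ)/4) / (z + 1) ^ ((1:ℂ)/4)) ^ 2
      = (z - 1) ^ ((1:ℂ)/2) / (z + 1) ^ ((1:ℂ)/2) := by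
    rw [div_pow, quarter_sq hzm, quarter_sq hzp]
  set A := (z - 1) ^ ((1:ℂ)/2) with hA_def
  set B := (z + 1) ^ ((1:ℂ)/2) with hB_def
  have hder : HasDerivAt (fun w : ℂ =>
      (w - 1) ^ ((1 : ℂ) / 2) * (w + 1) ^ ((1 : ℂ) / 2) / (w - (x : ℂ)))
      ((z * (A * B)⁻¹ * (z - (x:ℂ)) - (A * B) * 1) / (z - (x:ℂ)) ^ 2) z :=
    (hasDerivAt_F hcond hzm hzp).div ((hasDerivAt_id z).sub_const (x : ℂ)) hzx
  rw [hder.deriv] at *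
  rw [show z - (x:ℂ) = -((x:ℂ) - z) by ring]
  set u := (x : ℂ) - z with hu_def
  have hu0 : u ≠ 0 := hxz
  clear_value A B u
  constructor
  · rw [hQ, hsqrtC]
    field_simp [hA0, hB0, hsC0, hu0, hx0C]
    ring_nf
    field_simp [hA0, hB0, hsC0, hu0, I_ne_zero]
    linear_combination (2*A^2*B^2 + (1+(x:ℂ))*(s:ℂ)^2*B^2 + 2*u*z) * Complex.I_sq
      - B^2 * hs2C - 2*z * hu_def + ((x:ℂ)-1-2*z) * hA2 + (-2*A^2 - (1-(x:ℂ))) * hB2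
  · rw [hQ, hsqrtC]
    have e1 : A / B / (I * (s:ℂ)) = A / (B * (I * (s:ℂ))) := div_div _ _ _
    have e2 : (I * (s:ℂ)) / (A / B) = I * (s:ℂ) * B / A := by
      rw [div_div_eq_mul_div]
    have hBIs : B * (I * (s:ℂ)) ≠ 0 := mul_ne_zero hB0 (mul_ne_zero I_ne_zero hsC0)
    rw [e1, e2, div_sub_div _ _ hBIs hA0, div_mul_div_comm, one_mul, div_mul_div_comm, mul_one,
      div_eq_div_iff (mul_ne_zero (pow_ne_zero 2 hu0) (mul_ne_zero hBIs hA0))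
        (mul_ne_zero (mul_ne_zero hx0C hsC0) (mul_ne_zero (mul_ne_zero hu0 hA0) hB0))]
    linear_combination
      (-((s:ℂ)^2*B^2*(1+(x:ℂ))*(s:ℂ)*u*A*B) - 2*(s:ℂ)*u^2*A*B) * Complex.I_sq
      + ((s:ℂ)*u*A*B*B^2) * hs2C
      + ((s:ℂ)*u*A*B*(1+(x:ℂ))) * hA2
      + ((s:ℂ)*u*A*B*(1-(x:ℂ))) * hB2
      + (2*(s:ℂ)*u*A*B) * hu_def
end
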